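/- Let F be a field and let S be a subset of M_2(F) whose generated unital subalgebra is all of M_2(F). Then the F-linear span of all products of between 1 and 2 elements of S is all of M_2(F). In other words, l_0(S) ≤ 2 for every generating set S of M_2(F), so l_0(M_2(F)) = 2. -/

import Mathlib

/-!
If `L = L_2^0(S)` were proper, then `1 ∉ L`: a subspace containing `1`, `S` and `S · S` is all
of `M_2(F)`, because either `span (1, S)` is already closed under multiplication, or the subspace
strictly contains `span (1, S)`, which has dimension at least `3` as `S` contains two
non-commuting matrices. By Cayley–Hamilton, `det x • 1 = trace x • x - x * x ∈ L` for `x ∈ S` and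
for `x` a sum of two elements of `S`, so the quadratic form `det` vanishes on `span S`. A space of
singular `2 × 2` matrices has a common right or left kernel vector, so `S` leaves a line invariant
and cannot generate `M_2(F)`.
-/

open Matrix Submodule Module

/-- `L_k^0(S)`: the `F`-linear span of all words in `S` of length between `1` and `k`. -/
def wordSpan0 (F : Type*) [Field F] (n k : ℕ) (S : Set (Matrix (Fin n) (Fin n) F)) :
    Submodule F (Matrix (Fin n) (Fin n) F) :=
  Submodule.span F {M | ∃ w : List (Matrix (Fin n) (Fin n) F),
    1 ≤ w.length ∧ w.length ≤ k ∧ (∀ x ∈ w, x ∈ S) ∧ M = w.prod}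

section WordSpan

variable {F : Type*} [Field F] {n k : ℕ} {S : Set (Matrix (Fin n) (Fin n) F)}

theorem subset_wordSpan0 (hk : 1 ≤ k) : S ⊆ wordSpan0 F n k S := fun a ha =>
  subset_span ⟨[a], le_rfl, hk, by simpa using ha, by simp⟩

theorem mul_mem_wordSpan0 (hk : 2 ≤ k) {a b : Matrix (Fin n) (Fin n) F} (ha : a ∈ S)
    (hb : b ∈ S) : a * b ∈ wordSpan0 F n k S :=
  subset_span ⟨[a, b], by simp, hk, by simp [ha, hb], by simp⟩

end WordSpan

section AlgebraGeneration

variable {F A : Type*} [Field F] [Ring A] [Algebra F A] {S : Set A}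

theorem exists_not_commute_of_adjoin_eq_top (hS : Algebra.adjoin F S = ⊤) {x y : A}
    (hxy : ¬Commute x y) : ∃ a ∈ S, ∃ b ∈ S, ¬Commute a b := by
  by_contra! h
  have hmem (z : A) : z ∈ Algebra.adjoin F S := hS ▸ Algebra.mem_top
  refine hxy (Algebra.commute_of_mem_adjoin_of_forall_mem_commute (hmem y) fun b hb => ?_)
  exact (Algebra.commute_of_mem_adjoin_of_forall_mem_commute (hmem x) (h b hb)).symm

theorem span_insert_one_eq_top_of_mul_mem (hS : Algebra.adjoin F S = ⊤)
    (hmul : ∀ a ∈ S, ∀ b ∈ S, a * b ∈ span F (insert 1 S)) : span F (insert (1 : A) S) = ⊤ := by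
  set W := span F (insert (1 : A) S)
  have hWW : W * W ≤ W := by
    rw [span_mul_span, span_le]
    rintro _ ⟨a, ha, b, hb, rfl⟩
    rcases ha with rfl | ha
    · simpa using subset_span hb
    rcases hb with rfl | hb
    · simpa using subset_span (Set.mem_insert_of_mem _ ha)
    · exact hmul a ha b hb
  have h1 : (1 : A) ∈ W := subset_span (Set.mem_insert _ _)
  have hle : Algebra.adjoin F S ≤ W.toSubalgebra h1 fun x y hx hy => hWW (mul_mem_mul hx hy) :=
    Algebra.adjoin_le fun s hs => subset_span (Set.mem_insert_of_mem _ hs)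
  rw [hS] at hle
  exact eq_top_iff.2 fun x _ => hle Algebra.mem_top

theorem linearIndependent_one_of_not_commute {a b : A} (hab : ¬Commute a b) :
    LinearIndependent F ![1, a, b] := by
  have hne : a * b - b * a ≠ 0 := sub_ne_zero.2 hab
  have : Nontrivial A := ⟨⟨a * b, b * a, hab⟩⟩
  rw [Fintype.linearIndependent_iff]
  intro c hc
  simp only [Fin.sum_univ_three, Matrix.cons_val_zero, Matrix.cons_val_one,
    Matrix.cons_val_two, Matrix.head_cons, Matrix.tail_cons] at hc
  set x := c 0 • 1 + c 1 • a + c 2 • b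
  -- commuting the relation `x = 0` with `b`, then with `a`, isolates each coefficient
  have hc1 : c 1 • (a * b - b * a) = x * b - b * x := by
    simp only [x, add_mul, mul_add, smul_mul_assoc, mul_smul_comm, one_mul, mul_one, smul_sub]
    abel
  have hc2 : c 2 • (a * b - b * a) = a * x - x * a := by
    simp only [x, add_mul, mul_add, smul_mul_assoc, mul_smul_comm, one_mul, mul_one, smul_sub]
    abel
  rw [hc, zero_mul, mul_zero, sub_zero] at hc1 hc2
  have h1 : c 1 = 0 := (smul_eq_zero.1 hc1).resolve_right hne
  have h2 : c 2 = 0 := (smul_eq_zero.1 hc2).resolve_right hne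
  have h0 : c 0 = 0 := by
    simpa [x, h1, h2] using hc
  intro i
  fin_cases i <;> assumption

theorem eq_top_of_one_mem_of_mul_mem [FiniteDimensional F A] (hA : finrank F A ≤ 4)
    (hS : Algebra.adjoin F S = ⊤) {a b : A} (ha : a ∈ S) (hb : b ∈ S) (hab : ¬Commute a b)
    {V : Submodule F A} (h1 : 1 ∈ V) (hSV : S ⊆ V) (hmul : ∀ x ∈ S, ∀ y ∈ S, x * y ∈ V) :
    V = ⊤ := by
  set W := span F (insert (1 : A) S)
  have hWV : W ≤ V := span_le.2 (Set.insert_subset h1 hSV)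
  by_cases hW : ∀ x ∈ S, ∀ y ∈ S, x * y ∈ W
  · exact top_le_iff.1 (span_insert_one_eq_top_of_mul_mem hS hW ▸ hWV)
  push Not at hW
  obtain ⟨x, hx, y, hy, hxy⟩ := hW
  have h3 : 3 ≤ finrank F W := by
    have hle : span F (Set.range ![1, a, b]) ≤ W := by
      rw [span_le, Set.range_subset_iff]
      intro i
      fin_cases i
      exacts [subset_span (Set.mem_insert _ _), subset_span (Set.mem_insert_of_mem _ ha),
        subset_span (Set.mem_insert_of_mem _ hb)]
    simpa [finrank_span_eq_card (linearIndependent_one_of_not_commute hab)] using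
      finrank_mono hle
  have hlt : finrank F W < finrank F V :=
    finrank_lt_finrank_of_lt (lt_of_le_of_ne hWV fun h => hxy (h ▸ hmul x hx y hy))
  exact eq_top_of_finrank_eq (le_antisymm V.finrank_le (by omega))

end AlgebraGeneration

theorem QuadraticMap.map_eq_zero_of_mem_span {R M N : Type*} [CommRing R] [AddCommGroup M]
    [AddCommGroup N] [Module R M] [Module R N] (Q : QuadraticMap R M N) {s : Set M}
    (hs : ∀ x ∈ s, Q x = 0) (hadd : ∀ x ∈ s, ∀ y ∈ s, Q (x + y) = 0) {z : M}
    (hz : z ∈ span R s) : Q z = 0 := by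
  have hpolar_mem (x : M) (hx : x ∈ s) : span R s ≤ LinearMap.ker (polarBilin Q x) :=
    span_le.2 fun y hy => by simp [polar, hadd x hx y hy, hs x hx, hs y hy]
  have hpolar (x : M) (hx : x ∈ span R s) (y : M) (hy : y ∈ span R s) : polar Q x y = 0 := by
    have : span R s ≤ LinearMap.ker ((polarBilin Q).flip y) :=
      span_le.2 fun x' hx' => hpolar_mem x' hx' hy
    exact this hx
  induction hz using span_induction with
  | mem x hx => exact hs x hx
  | zero => exact Q.map_zero
  | add x y hx hy hQx hQy => simpa [polar, hQx, hQy] using hpolar x hx y hy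
  | smul c x _ hQx => rw [Q.map_smul, hQx, smul_zero]

section Invariant

variable {F n : Type*} [Field F] [Fintype n] [DecidableEq n] {S : Set (Matrix n n F)}

theorem Matrix.adjoin_ne_top_of_mulVec_mem {p : Submodule F (n → F)} (hp₀ : p ≠ ⊥)
    (hp : p ≠ ⊤) (hS : ∀ s ∈ S, ∀ x ∈ p, s *ᵥ x ∈ p) : Algebra.adjoin F S ≠ ⊤ := by
  intro htop
  have hinv (m : Matrix n n F) (hm : m ∈ Algebra.adjoin F S) : ∀ x ∈ p, m *ᵥ x ∈ p := by
    induction hm using Algebra.adjoin_induction with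
    | mem s hs => exact hS s hs
    | algebraMap r =>
      intro x hx
      simpa [Algebra.algebraMap_eq_smul_one, smul_mulVec] using p.smul_mem r hx
    | add m m' _ _ h h' => intro x hx; rw [add_mulVec]; exact add_mem (h x hx) (h' x hx)
    | mul m m' _ _ h h' => intro x hx; rw [← mulVec_mulVec]; exact h _ (h' x hx)
  obtain ⟨x, hx, hx₀⟩ := exists_mem_ne_zero_of_ne_bot hp₀
  obtain ⟨y, hy⟩ : ∃ y, y ∉ p := by
    by_contra! h
    exact hp (eq_top_iff.2 fun y _ => h y)
  obtain ⟨i, hi⟩ : ∃ i, x i ≠ 0 := by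
    by_contra! h
    exact hx₀ (funext h)
  -- the rank-one matrix `y ⊗ (x i)⁻¹ eᵢ` moves `x ∈ p` to `y ∉ p`
  have hmove := hinv (vecMulVec y (Pi.single i (x i)⁻¹)) (htop ▸ Algebra.mem_top) x hx
  rw [vecMulVec_mulVec, single_dotProduct, inv_mul_cancel₀ hi] at hmove
  exact hy (by simpa using hmove)

theorem Matrix.adjoin_ne_top_of_mulVec_eq_zero (hn : 1 < Fintype.card n) {v : n → F}
    (hv : v ≠ 0) (hS : ∀ s ∈ S, s *ᵥ v = 0) : Algebra.adjoin F S ≠ ⊤ := by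
  refine adjoin_ne_top_of_mulVec_mem (p := F ∙ v) (by simpa using hv) (fun h => ?_) ?_
  · have := finrank_span_singleton (K := F) hv
    rw [h, finrank_top, finrank_fintype_fun_eq_card] at this
    omega
  · intro s hs x hx
    obtain ⟨c, rfl⟩ := mem_span_singleton.1 hx
    rw [mulVec_smul, hS s hs, smul_zero]
    exact zero_mem _

theorem Matrix.adjoin_ne_top_of_vecMul_eq_zero (hn : 1 < Fintype.card n) {φ : n → F}
    (hφ : φ ≠ 0) (hS : ∀ s ∈ S, φ ᵥ* s = 0) : Algebra.adjoin F S ≠ ⊤ := by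
  refine adjoin_ne_top_of_mulVec_mem (p := LinearMap.ker (dotProductEquiv F n φ))
    (LinearMap.ker_ne_bot_of_finrank_lt (by simpa using hn)) (fun h => ?_) ?_
  · rw [LinearMap.ker_eq_top, LinearEquiv.map_eq_zero_iff] at h
    exact hφ h
  · intro s hs x hx
    rw [LinearMap.mem_ker, dotProductEquiv_apply_apply] at hx ⊢
    rw [dotProduct_mulVec, hS s hs, zero_dotProduct]

end Invariant

section CommRing

variable {R : Type*} [CommRing R]

def Matrix.detFinTwoQuadraticForm : QuadraticForm R (Matrix (Fin 2) (Fin 2) R) :=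
  .linMulLin (entryLinearMap R R 0 0) (entryLinearMap R R 1 1) -
    .linMulLin (entryLinearMap R R 0 1) (entryLinearMap R R 1 0)

@[simp]
theorem Matrix.detFinTwoQuadraticForm_apply (x : Matrix (Fin 2) (Fin 2) R) :
    detFinTwoQuadraticForm x = x.det := by
  simp [detFinTwoQuadraticForm, det_fin_two]

theorem Matrix.det_smul_one_fin_two [Nontrivial R] (x : Matrix (Fin 2) (Fin 2) R) :
    x.det • (1 : Matrix (Fin 2) (Fin 2) R) = x.trace • x - x * x := by
  have h := aeval_self_charpoly x
  rw [charpoly_fin_two] at h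
  simp only [map_add, map_sub, map_mul, Polynomial.aeval_X, Polynomial.aeval_C,
    Algebra.algebraMap_eq_smul_one, smul_one_mul, sq] at h
  rw [eq_neg_of_add_eq_zero_right h, neg_sub]

end CommRing

section Field

variable {F : Type*} [Field F]

theorem Matrix.exists_eq_vecMulVec_of_det_eq_zero {x : Matrix (Fin 2) (Fin 2) F}
    (hx : x.det = 0) : ∃ u w : Fin 2 → F, x = vecMulVec u w := by
  have hminor (i j k l : Fin 2) : x k l * x i j = x k j * x i l := by
    rw [det_fin_two] at hx
    fin_cases i <;> fin_cases j <;> fin_cases k <;> fin_cases l <;>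
      simp only [Fin.zero_eta, Fin.mk_one] <;>
      first | ring1 | linear_combination hx | linear_combination -hx
  by_cases h0 : ∀ i j, x i j = 0
  · exact ⟨0, 0, by ext i j; simp [h0]⟩
  push Not at h0
  obtain ⟨i, j, hij⟩ := h0
  refine ⟨fun k => x k j, fun l => x i l / x i j, ?_⟩
  ext k l
  rw [vecMulVec_apply, mul_div_assoc', eq_div_iff hij, hminor]

theorem Matrix.det_vecMulVec_add_vecMulVec (u w u' w' : Fin 2 → F) :
    (vecMulVec u w + vecMulVec u' w').det = (![u 1, -u 0] ⬝ᵥ u') * (w' ⬝ᵥ ![w 1, -w 0]) := by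
  simp [det_fin_two, vecMulVec_apply, dotProduct, Fin.sum_univ_two]
  ring

theorem Matrix.exists_mulVec_eq_zero_or_vecMul_eq_zero
    {U : Submodule F (Matrix (Fin 2) (Fin 2) F)} (hU : ∀ y ∈ U, y.det = 0)
    {a : Matrix (Fin 2) (Fin 2) F} (haU : a ∈ U) (ha : a ≠ 0) :
    (∃ v ≠ 0, ∀ y ∈ U, y *ᵥ v = 0) ∨ (∃ φ ≠ 0, ∀ y ∈ U, φ ᵥ* y = 0) := by
  obtain ⟨u, w, rfl⟩ := exists_eq_vecMulVec_of_det_eq_zero (hU a haU)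
  set v : Fin 2 → F := ![w 1, -w 0]
  set φ : Fin 2 → F := ![u 1, -u 0]
  have hv : v ≠ 0 := fun h => ha <| by
    have h0 := congrFun h 0
    have h1 := congrFun h 1
    ext i j
    fin_cases j <;> simp_all [v, vecMulVec_apply]
  have hφ : φ ≠ 0 := fun h => ha <| by
    have h0 := congrFun h 0
    have h1 := congrFun h 1
    ext i j
    fin_cases i <;> simp_all [φ, vecMulVec_apply]
  have hsplit (y) (hy : y ∈ U) : y *ᵥ v = 0 ∨ φ ᵥ* y = 0 := by
    obtain ⟨u', w', rfl⟩ := exists_eq_vecMulVec_of_det_eq_zero (hU y hy)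
    have hdet := hU _ (add_mem haU hy)
    rw [det_vecMulVec_add_vecMulVec] at hdet
    rw [vecMulVec_mulVec, vecMul_vecMulVec]
    rcases mul_eq_zero.1 hdet with h | h
    · exact .inr (by rw [h, zero_smul])
    · exact .inl (by rw [h, MulOpposite.op_zero, zero_smul])
  refine (em (∀ y ∈ U, y *ᵥ v = 0)).imp (fun h => ⟨v, hv, h⟩) fun h => ⟨φ, hφ, fun y hy => ?_⟩
  push Not at h
  obtain ⟨c, hcU, hc⟩ := h
  by_contra hy'
  -- otherwise `c + y` would neither kill `v` nor be killed by `φ`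
  have hcφ := (hsplit c hcU).resolve_left hc
  have hyv := (hsplit y hy).resolve_right hy'
  rcases hsplit (c + y) (add_mem hcU hy) with h | h
  · rw [add_mulVec, hyv, add_zero] at h
    exact hc h
  · rw [vecMul_add, hcφ, zero_add] at h
    exact hy' h

theorem Matrix.det_eq_zero_of_mem_span {L : Submodule F (Matrix (Fin 2) (Fin 2) F)}
    {S : Set (Matrix (Fin 2) (Fin 2) F)} (h1 : 1 ∉ L) (hSL : S ⊆ L)
    (hSSL : ∀ x ∈ S, ∀ y ∈ S, x * y ∈ L) {z : Matrix (Fin 2) (Fin 2) F} (hz : z ∈ span F S) :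
    z.det = 0 := by
  have hdet (x) (hx : x ∈ L) (hxx : x * x ∈ L) : x.det = 0 := by
    by_contra h
    refine h1 ((L.smul_mem_iff h).1 ?_)
    rw [det_smul_one_fin_two]
    exact sub_mem (L.smul_mem _ hx) hxx
  refine detFinTwoQuadraticForm_apply z ▸ detFinTwoQuadraticForm.map_eq_zero_of_mem_span
    (fun x hx => by simpa using hdet x (hSL hx) (hSSL x hx x hx)) (fun x hx y hy => ?_) hz
  have hsq : (x + y) * (x + y) ∈ L := by
    simpa only [add_mul, mul_add] using add_mem (add_mem (hSSL x hx x hx) (hSSL y hy x hx))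
      (add_mem (hSSL x hx y hy) (hSSL y hy y hy))
  simpa using hdet _ (add_mem (hSL hx) (hSL hy)) hsq

end Field

/-- For every generating set `S` of `M_2(F)`, the span of words of length between `1` and
`2` is all of `M_2(F)`; i.e. `l_0(S) ≤ 2`. -/
theorem stmt_3 (F : Type*) [Field F] (S : Set (Matrix (Fin 2) (Fin 2) F))
    (hgen : Algebra.adjoin F S = ⊤) :
    wordSpan0 F 2 2 S = ⊤ := by
  set L := wordSpan0 F 2 2 S
  have hSL : S ⊆ L := subset_wordSpan0 one_le_two
  have hSSL (x) (hx : x ∈ S) (y) (hy : y ∈ S) : x * y ∈ L := mul_mem_wordSpan0 le_rfl hx hy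
  have hnc : ¬Commute !![(0 : F), 1; 0, 0] !![0, 0; 1, 0] := fun h => by
    simpa using congrFun (congrFun h 0) 0
  obtain ⟨a, ha, b, hb, hab⟩ := exists_not_commute_of_adjoin_eq_top hgen hnc
  by_contra hL
  have h1 : 1 ∉ L := fun h1 =>
    hL (eq_top_of_one_mem_of_mul_mem (by simp [finrank_matrix]) hgen ha hb hab h1 hSL hSSL)
  have hdet (z) (hz : z ∈ span F S) : z.det = 0 := det_eq_zero_of_mem_span h1 hSL hSSL hz
  have ha₀ : a ≠ 0 := by rintro rfl; exact hab (Commute.zero_left b)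
  have hcard : 1 < Fintype.card (Fin 2) := by simp
  rcases exists_mulVec_eq_zero_or_vecMul_eq_zero hdet (subset_span ha) ha₀ with
    ⟨v, hv, hker⟩ | ⟨φ, hφ, hker⟩
  · exact adjoin_ne_top_of_mulVec_eq_zero hcard hv (fun s hs => hker s (subset_span hs)) hgen
  · exact adjoin_ne_top_of_vecMul_eq_zero hcard hφ (fun s hs => hker s (subset_span hs)) hgen
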